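/- Let k ≥ 3 be an odd integer and let b_1, …, b_k be nonzero even integers with at most two channel indices, and assume that either b_1 ≥ 4, or b_1 = 2 and b_2 ≤ −2. Then the continued fraction value v = [b_1, …, b_k] can be written in at least one of the following forms, for suitable integers m, n, l: (0) v = [2m+1, 2n−1] with m ≥ 1 and n ∉ {0, 1}; (1) v = [2m, 2n, 2l] with m ≥ 1, |n| ≥ 2, |l| ≥ 2, and moreover n ≤ −2 if m = 1; (2) v = [2m, 2n−1, −2l] with m ≥ 1, |n| ≥ 2, l ≥ 1, and moreover n ≤ −2 if m = 1; (3) v = [2m, 2n+1, 2l] with m ≥ 1, |n| ≥ 2, l ≥ 1, and moreover n ≤ −2 if m = 1; (4) v = [2m+1, 2n, 2l−1] with m ≥ 1, n ≠ 0, l ∉ {0, 1}; (5) v = [2m+1, 2n, −2, 2l−1] with m ≥ 1, n ≤ −1, l ≥ 2; (6) v = [2m+1, 2n−1, −2, 2l] with m ≥ 1, n ≤ −1, l ≥ 1; (7) v = [2m+1, 2n, 2, 2l−1] with m ≥ 1, n ≥ 1, l ≤ −1; (8) v = [2m+1, 2n−1, 2, 2l] with m ≥ 1, n ≥ 2, l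 ≤ −1. -/

import Mathlib

/-- The (subtractive) continued fraction value of a finite list of rationals:
`cf [] = 0` and `cf (a :: t) = (a - cf t)⁻¹`. -/
def cf : List ℚ → ℚ
  | [] => 0
  | a :: t => (a - cf t)⁻¹

/-- `i` is a channel index for the (1-indexed) sequence `b` if
`b i * b (i+1) < 0` or `b i * b (i+1) > 4`. -/
def ChannelIndex (b : ℕ → ℤ) (i : ℕ) : Prop :=
  b i * b (i + 1) < 0 ∨ 4 < b i * b (i + 1)

instance (b : ℕ → ℤ) (i : ℕ) : Decidable (ChannelIndex b i) := by
  unfold ChannelIndex; infer_instance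


/-!
Write `b₁ = 2m`. Because `1` is already a channel index, at most one channel index lies in
`[2, k-1]`, so `[b₂, …, b_k]` is made of at most two blocks, each a run of `2`s, a run of `-2`s
or a single entry. The map `x ↦ (2 - x)⁻¹` is conjugate under `x ↦ (1 - x)⁻¹` to `y ↦ y + 1`,
so a run of `n` twos in front of a tail of value `x < 1` has value `1 - (n + (1 - x)⁻¹)⁻¹`;
runs of `-2`s follow from `cf (-l) = -cf l`. This makes the value of the tail equal to `0` or
`±1` plus the value of a list of length at most three, and moving that constant into the head
`2m` gives one of the forms, the parity of `k` deciding which.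
-/

open List

lemma cf_cons (a : ℚ) (t : List ℚ) : cf (a :: t) = (a - cf t)⁻¹ := rfl

lemma cf_singleton (a : ℚ) : cf [a] = a⁻¹ := by simp [cf]

lemma cf_map_neg (l : List ℚ) : cf (l.map Neg.neg) = -cf l := by
  induction l with
  | nil => simp [cf]
  | cons a t ih =>
    rw [map_cons, cf_cons, cf_cons, ih, ← inv_neg, neg_sub, sub_neg_eq_add, neg_add_eq_sub]

lemma cf_cons_eq_of_eq_add {t r : List ℚ} {c : ℚ} (h : cf t = c + cf r) (a : ℚ) :
    cf (a :: t) = cf ((a - c) :: r) := by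
  rw [cf_cons, cf_cons, h, sub_sub]

lemma cf_map_neg_eq_of_eq_add {t r : List ℚ} {c : ℚ} (h : cf t = c + cf r) :
    cf (t.map Neg.neg) = -c + cf (r.map Neg.neg) := by
  rw [cf_map_neg, cf_map_neg, h, neg_add]

lemma cf_replicate_two_append (n : ℕ) {t : List ℚ} (ht : cf t < 1) :
    cf (replicate n 2 ++ t) = 1 - (n + (1 - cf t)⁻¹)⁻¹ := by
  induction n with
  | zero => simp
  | succ n ih =>
    rw [replicate_succ, cons_append, cf_cons, ih]
    generalize hy : (1 - cf t)⁻¹ = y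
    have : 0 < y := hy ▸ inv_pos.2 (by linarith)
    have : (0 : ℚ) < n + y := by positivity
    push_cast
    rw [show (2 : ℚ) - (1 - (n + y)⁻¹) = (n + 1 + y) / (n + y) by field_simp; ring, inv_div]
    field_simp
    ring

lemma cf_replicate_two (n : ℕ) : cf (replicate n 2) = 1 + cf [-(n + 1)] := by
  rw [cf_singleton, inv_neg, ← sub_eq_add_neg]
  simpa [cf] using cf_replicate_two_append n (t := []) (by simp [cf])

lemma cf_replicate_neg_two (n : ℕ) : cf (replicate n (-2)) = -1 + cf [n + 1] := by
  simpa using cf_map_neg_eq_of_eq_add (cf_replicate_two n)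

lemma cf_replicate_two_append_cons (n : ℕ) (u : ℚ) (t : List ℚ)
    (hu : u - cf t < 0 ∨ 1 < u - cf t) :
    cf (replicate n 2 ++ u :: t) = 1 + cf (-(n + 1) :: (u - 1) :: t) := by
  have hd : u - cf t ≠ 0 := by rcases hu with h | h <;> linarith
  have hd1 : u - cf t - 1 ≠ 0 := by rcases hu with h | h <;> linarith
  have hlt : cf (u :: t) < 1 := by
    rw [cf_cons]
    rcases hu with h | h
    · exact (inv_lt_zero.2 h).trans one_pos
    · exact inv_lt_one_of_one_lt₀ h
  rw [cf_replicate_two_append n hlt, cf_cons, cf_cons, cf_cons, sub_right_comm u 1]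
  generalize u - cf t = d at hd hd1 ⊢
  have hinv : (1 - d⁻¹)⁻¹ = 1 + (d - 1)⁻¹ := by
    rw [show 1 - d⁻¹ = (d - 1) / d by field_simp, inv_div]
    field_simp
    ring
  rw [hinv, show -((n : ℚ) + 1) - (d - 1)⁻¹ = -(n + (1 + (d - 1)⁻¹)) by ring, inv_neg]
  ring

lemma cf_replicate_neg_two_append_cons (n : ℕ) (u : ℚ) (t : List ℚ)
    (hu : 0 < u - cf t ∨ u - cf t < -1) :
    cf (replicate n (-2) ++ u :: t) = -1 + cf ((n + 1) :: (u + 1) :: t) := by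
  have := cf_map_neg_eq_of_eq_add (cf_replicate_two_append_cons n (-u) (t.map Neg.neg)
    (by rw [cf_map_neg]; rcases hu with h | h <;> [left; right] <;> linarith))
  simpa [Function.comp_def, add_comm] using this

lemma cf_replicate_two_append_replicate_neg_two (a c : ℕ) (hc : c ≠ 0) :
    cf (replicate a 2 ++ replicate c (-2)) = 1 + cf [-(a + 1), -2, c] := by
  obtain ⟨c, rfl⟩ := Nat.exists_eq_succ_of_ne_zero hc
  have hneg := cf_replicate_neg_two c
  have hpos : (0 : ℚ) < ((c : ℚ) + 1)⁻¹ := by positivity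
  rw [replicate_succ, cf_replicate_two_append_cons a _ _
    (Or.inl (by rw [hneg, cf_singleton]; linarith)), cf_cons, cf_cons (-(a + 1) : ℚ),
    cf_cons_eq_of_eq_add hneg]
  push_cast
  ring_nf

lemma cf_replicate_neg_two_append_replicate_two (a c : ℕ) (hc : c ≠ 0) :
    cf (replicate a (-2) ++ replicate c 2) = -1 + cf [a + 1, 2, -c] := by
  simpa using cf_map_neg_eq_of_eq_add (cf_replicate_two_append_replicate_neg_two a c hc)

def HasShortForm (v : ℚ) : Prop :=
  (∃ m n : ℤ, 1 ≤ m ∧ n ≠ 0 ∧ n ≠ 1 ∧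
    v = cf [2 * (m : ℚ) + 1, 2 * (n : ℚ) - 1]) ∨
  (∃ m n l : ℤ, 1 ≤ m ∧ 2 ≤ |n| ∧ 2 ≤ |l| ∧ (m = 1 → n ≤ -2) ∧
    v = cf [2 * (m : ℚ), 2 * (n : ℚ), 2 * (l : ℚ)]) ∨
  (∃ m n l : ℤ, 1 ≤ m ∧ 2 ≤ |n| ∧ 1 ≤ l ∧ (m = 1 → n ≤ -2) ∧
    v = cf [2 * (m : ℚ), 2 * (n : ℚ) - 1, -(2 * (l : ℚ))]) ∨
  (∃ m n l : ℤ, 1 ≤ m ∧ 2 ≤ |n| ∧ 1 ≤ l ∧ (m = 1 → n ≤ -2) ∧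
    v = cf [2 * (m : ℚ), 2 * (n : ℚ) + 1, 2 * (l : ℚ)]) ∨
  (∃ m n l : ℤ, 1 ≤ m ∧ n ≠ 0 ∧ l ≠ 0 ∧ l ≠ 1 ∧
    v = cf [2 * (m : ℚ) + 1, 2 * (n : ℚ), 2 * (l : ℚ) - 1]) ∨
  (∃ m n l : ℤ, 1 ≤ m ∧ n ≤ -1 ∧ 2 ≤ l ∧
    v = cf [2 * (m : ℚ) + 1, 2 * (n : ℚ), -2, 2 * (l : ℚ) - 1]) ∨
  (∃ m n l : ℤ, 1 ≤ m ∧ n ≤ -1 ∧ 1 ≤ l ∧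
    v = cf [2 * (m : ℚ) + 1, 2 * (n : ℚ) - 1, -2, 2 * (l : ℚ)]) ∨
  (∃ m n l : ℤ, 1 ≤ m ∧ 1 ≤ n ∧ l ≤ -1 ∧
    v = cf [2 * (m : ℚ) + 1, 2 * (n : ℚ), 2, 2 * (l : ℚ) - 1]) ∨
  (∃ m n l : ℤ, 1 ≤ m ∧ 2 ≤ n ∧ l ≤ -1 ∧
    v = cf [2 * (m : ℚ) + 1, 2 * (n : ℚ) - 1, 2, 2 * (l : ℚ)])

section ShortForms

variable {m : ℤ} {ε : ℤ}

lemma hasShortForm_replicate (hm : 1 ≤ m) (hε : ε = 2 ∨ ε = -2) (hmε : m = 1 → ε < 0)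
    {n : ℕ} (hn : Even n) (hn0 : n ≠ 0) :
    HasShortForm (cf (2 * m :: replicate n (ε : ℚ))) := by
  obtain ⟨q, rfl⟩ := hn
  left
  rcases hε with rfl | rfl
  · refine ⟨m - 1, -q, by omega, by omega, by omega, ?_⟩
    rw [cf_cons_eq_of_eq_add (by exact_mod_cast cf_replicate_two _)]
    push_cast; ring_nf
  · refine ⟨m, q + 1, hm, by omega, by omega, ?_⟩
    rw [cf_cons_eq_of_eq_add (by exact_mod_cast cf_replicate_neg_two _)]
    push_cast; ring_nf

lemma hasShortForm_cons_replicate (hm : 1 ≤ m) (hε : ε = 2 ∨ ε = -2) {s : ℤ} (hs : 2 ≤ |s|)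
    (hms : m = 1 → s < 0) {c : ℕ} (hc : Odd c) :
    HasShortForm (cf (2 * m :: 2 * s :: replicate c (ε : ℚ))) := by
  obtain ⟨γ, rfl⟩ := hc
  have hms' : m = 1 → s ≤ -2 := fun h => by have := hms h; rw [abs_of_neg this] at hs; omega
  right; right
  rcases hε with rfl | rfl
  · refine Or.inl ⟨m, s, γ + 1, hm, hs, by omega, hms', ?_⟩
    rw [cf_cons (2 * m), cf_cons (2 * m),
      cf_cons_eq_of_eq_add (by exact_mod_cast cf_replicate_two _)]
    push_cast; ring_nf
  · refine Or.inr (Or.inl ⟨m, s, γ + 1, hm, hs, by omega, hms', ?_⟩)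
    rw [cf_cons (2 * m), cf_cons (2 * m),
      cf_cons_eq_of_eq_add (by exact_mod_cast cf_replicate_neg_two _)]
    push_cast; ring_nf

lemma hasShortForm_replicate_append_singleton (hm : 1 ≤ m) (hε : ε = 2 ∨ ε = -2)
    (hmε : m = 1 → ε < 0) {a : ℕ} (ha : Odd a) {y : ℤ} (hy : Even y) (hy0 : y ≠ 0)
    (hyε : y ≠ ε) :
    HasShortForm (cf (2 * m :: (replicate a (ε : ℚ) ++ [(y : ℚ)]))) := by
  obtain ⟨α, rfl⟩ := ha
  obtain ⟨t, rfl⟩ := hy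
  right; right; right; right; left
  rcases hε with rfl | rfl
  · refine ⟨m - 1, -(α + 1), t, by omega, by omega, by omega, by omega, ?_⟩
    have ht : ((t + t : ℤ) : ℚ) < 0 ∨ 1 < ((t + t : ℤ) : ℚ) := by
      rcases lt_or_gt_of_ne hy0 with h | h
      · exact Or.inl (by exact_mod_cast h)
      · exact Or.inr (by exact_mod_cast (by omega : 1 < t + t))
    push_cast at ht ⊢
    rw [cf_cons_eq_of_eq_add
      (cf_replicate_two_append_cons _ _ [] (by simpa only [cf, sub_zero] using ht))]
    push_cast; ring_nf
  · refine ⟨m, α + 1, t + 1, hm, by omega, by omega, by omega, ?_⟩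
    have ht : 0 < ((t + t : ℤ) : ℚ) ∨ ((t + t : ℤ) : ℚ) < -1 := by
      rcases lt_or_gt_of_ne hy0 with h | h
      · exact Or.inr (by exact_mod_cast (by omega : t + t < -1))
      · exact Or.inl (by exact_mod_cast h)
    push_cast at ht ⊢
    rw [cf_cons_eq_of_eq_add
      (cf_replicate_neg_two_append_cons _ _ [] (by simpa only [cf, sub_zero] using ht))]
    push_cast; ring_nf

lemma hasShortForm_replicate_append_replicate (hm : 1 ≤ m) (hε : ε = 2 ∨ ε = -2)
    (hmε : m = 1 → ε < 0) {a c : ℕ} (ha : a ≠ 0) (hc : c ≠ 0) (hac : Even (a + c)) :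
    HasShortForm (cf (2 * m :: (replicate a (ε : ℚ) ++ replicate c (-ε : ℚ)))) := by
  rcases eq_or_ne c 1 with rfl | hc1
  · have := hasShortForm_replicate_append_singleton hm hε hmε (a := a)
      (by obtain ⟨w, hw⟩ := hac; exact ⟨w - 1, by omega⟩) (y := -ε) (by rw [even_neg]; grind)
      (by omega) (by omega)
    push_cast at this
    exact this
  right; right; right; right; right
  rcases hε with rfl | rfl
  · have h := cf_cons_eq_of_eq_add
      (cf_replicate_two_append_replicate_neg_two a c (by omega)) (2 * m)
    push_cast at h ⊢
    rcases Nat.even_or_odd a with ⟨α, rfl⟩ | ⟨α, rfl⟩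
    · obtain ⟨γ, rfl⟩ : ∃ γ, c = 2 * γ := ⟨c / 2, by grind⟩
      refine Or.inr (Or.inl ⟨m - 1, -α, γ, by omega, by omega, by omega, ?_⟩)
      rw [h]; push_cast; ring_nf
    · obtain ⟨γ, rfl⟩ : ∃ γ, c = 2 * γ + 1 := ⟨c / 2, by grind⟩
      refine Or.inl ⟨m - 1, -(α + 1), γ + 1, by omega, by omega, by omega, ?_⟩
      rw [h]; push_cast; ring_nf
  · have h := cf_cons_eq_of_eq_add
      (cf_replicate_neg_two_append_replicate_two a c (by omega)) (2 * m)
    push_cast [neg_neg] at h ⊢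
    rcases Nat.even_or_odd a with ⟨α, rfl⟩ | ⟨α, rfl⟩
    · obtain ⟨γ, rfl⟩ : ∃ γ, c = 2 * γ := ⟨c / 2, by grind⟩
      refine Or.inr (Or.inr (Or.inr ⟨m, α + 1, -γ, hm, by omega, by omega, ?_⟩))
      rw [h]; push_cast; ring_nf
    · obtain ⟨γ, rfl⟩ : ∃ γ, c = 2 * γ + 1 := ⟨c / 2, by grind⟩
      refine Or.inr (Or.inr (Or.inl ⟨m, α + 1, -γ, hm, by omega, by omega, ?_⟩))
      rw [h]; push_cast; ring_nf

lemma hasShortForm_three (hm : 1 ≤ m) {s t : ℤ} (hs : 2 ≤ |s|) (ht : 2 ≤ |t|)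
    (hms : m = 1 → s < 0) :
    HasShortForm (cf [2 * m, 2 * s, 2 * t]) := by
  have hms' : m = 1 → s ≤ -2 := fun h => by have := hms h; rw [abs_of_neg this] at hs; omega
  exact Or.inr (Or.inl ⟨m, s, t, hm, hs, ht, hms', rfl⟩)

end ShortForms

def entries (b : ℕ → ℤ) (p n : ℕ) : List ℚ :=
  (List.range n).map fun i => (b (i + p) : ℚ)

lemma entries_add (b : ℕ → ℤ) (p n n' : ℕ) :
    entries b p (n + n') = entries b p n ++ entries b (p + n) n' := by
  simp only [entries, range_add, map_append, map_map]
  congr 2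
  funext i
  simp only [Function.comp_apply]
  congr 2
  omega

lemma entries_one (b : ℕ → ℤ) (p : ℕ) : entries b p 1 = [(b p : ℚ)] := by
  simp [entries]

lemma entries_eq_replicate {b : ℕ → ℤ} {p n : ℕ} {x : ℤ}
    (h : ∀ i, p ≤ i → i < p + n → b i = x) : entries b p n = replicate n (x : ℚ) := by
  rw [entries, eq_replicate_iff]
  refine ⟨by simp, ?_⟩
  simp only [mem_map, mem_range]
  rintro _ ⟨i, hi, rfl⟩
  rw [h (i + p) (by omega) (by omega)]

lemma eq_and_eq_two_or_of_not_channelIndex {b : ℕ → ℤ} {i : ℕ}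
    (hi : b i ≠ 0 ∧ Even (b i)) (hi' : b (i + 1) ≠ 0 ∧ Even (b (i + 1)))
    (h : ¬ChannelIndex b i) : b (i + 1) = b i ∧ (b i = 2 ∨ b i = -2) := by
  obtain ⟨⟨u, hu⟩, ⟨w, hw⟩⟩ := And.intro hi.2 hi'.2
  simp only [ChannelIndex, not_or, not_lt, hu, hw] at h hi hi' ⊢
  have huw : u * w = 1 := by
    have : u * w ≠ 0 := mul_ne_zero (by omega) (by omega)
    rcases lt_or_gt_of_ne this with h' | h' <;> nlinarith
  rcases Int.eq_one_or_neg_one_of_mul_eq_one' huw with ⟨rfl, rfl⟩ | ⟨rfl, rfl⟩ <;> norm_num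

lemma eq_of_forall_not_channelIndex {b : ℕ → ℤ} {p q : ℕ}
    (hb : ∀ i, p ≤ i → i ≤ q → b i ≠ 0 ∧ Even (b i))
    (hnc : ∀ i, p ≤ i → i < q → ¬ChannelIndex b i) :
    ∀ i, p ≤ i → i ≤ q → b i = b p := by
  intro i hpi
  induction i, hpi using Nat.le_induction with
  | base => exact fun _ => rfl
  | succ i hpi ih =>
    intro hiq
    rw [(eq_and_eq_two_or_of_not_channelIndex (hb i hpi (by omega)) (hb (i + 1) (by omega) hiq)
      (hnc i hpi (by omega))).1, ih (by omega)]

lemma eq_two_or_single_of_forall_not_channelIndex {b : ℕ → ℤ} {p n : ℕ} (hn : n ≠ 0)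
    (hb : ∀ i, p ≤ i → i < p + n → b i ≠ 0 ∧ Even (b i))
    (hnc : ∀ i, p ≤ i → i + 1 < p + n → ¬ChannelIndex b i) :
    (∃ ε : ℤ, (ε = 2 ∨ ε = -2) ∧ ∀ i, p ≤ i → i < p + n → b i = ε) ∨
      (n = 1 ∧ ∃ s : ℤ, b p = 2 * s ∧ 2 ≤ |s|) := by
  have hconst := eq_of_forall_not_channelIndex (q := p + n - 1)
    (fun i h1 h2 => hb i h1 (by omega)) (fun i h1 h2 => hnc i h1 (by omega))
  by_cases hn1 : n = 1
  · obtain ⟨hp0, s, hs⟩ := hb p le_rfl (by omega)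
    by_cases hs2 : 2 ≤ |s|
    · exact Or.inr ⟨hn1, s, by omega, hs2⟩
    · refine Or.inl ⟨b p, ?_, fun i h1 h2 => by rw [show i = p by omega]⟩
      rcases abs_cases s with h | h <;> omega
  · refine Or.inl ⟨b p, ?_, fun i h1 h2 => hconst i h1 (by omega)⟩
    exact (eq_and_eq_two_or_of_not_channelIndex (hb p le_rfl (by omega)) (hb (p + 1) (by omega)
      (by omega)) (hnc p le_rfl (by omega))).2

lemma hasShortForm_of_forall_not_channelIndex {b : ℕ → ℤ} {k : ℕ} {m : ℤ} (hk : 3 ≤ k)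
    (hkodd : Odd k) (hb : ∀ i, 2 ≤ i → i ≤ k → b i ≠ 0 ∧ Even (b i)) (hm : 1 ≤ m)
    (hmb : m = 1 → b 2 < 0) (hnc : ∀ i, 2 ≤ i → i < k → ¬ChannelIndex b i) :
    HasShortForm (cf (2 * m :: entries b 2 (k - 1))) := by
  rcases eq_two_or_single_of_forall_not_channelIndex (p := 2) (n := k - 1) (by omega)
    (fun i h1 h2 => hb i h1 (by omega)) (fun i h1 h2 => hnc i h1 (by omega)) with
    ⟨ε, hε, hconst⟩ | ⟨hk1, -⟩
  · rw [entries_eq_replicate hconst]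
    exact hasShortForm_replicate hm hε (hconst 2 le_rfl (by omega) ▸ hmb)
      (by obtain ⟨w, hw⟩ := hkodd; exact ⟨w, by omega⟩) (by omega)
  · omega

lemma hasShortForm_of_channelIndex {b : ℕ → ℤ} {k j : ℕ} {m : ℤ} (hkodd : Odd k) (hj : 2 ≤ j)
    (hjk : j < k) (hb : ∀ i, 2 ≤ i → i ≤ k → b i ≠ 0 ∧ Even (b i)) (hm : 1 ≤ m)
    (hmb : m = 1 → b 2 < 0) (hchj : ChannelIndex b j)
    (hnc : ∀ i, 2 ≤ i → i < k → i ≠ j → ¬ChannelIndex b i) :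
    HasShortForm (cf (2 * m :: entries b 2 (k - 1))) := by
  rw [show k - 1 = (j - 1) + (k - j) by omega, entries_add, show 2 + (j - 1) = j + 1 by omega]
  rcases eq_two_or_single_of_forall_not_channelIndex (p := 2) (n := j - 1) (by omega)
    (fun i h1 h2 => hb i h1 (by omega)) (fun i h1 h2 => hnc i h1 (by omega) (by omega)) with
    ⟨ε, hε, hP⟩ | ⟨hj2, s, hs, hs2⟩ <;>
  rcases eq_two_or_single_of_forall_not_channelIndex (p := j + 1) (n := k - j) (by omega)
    (fun i h1 h2 => hb i (by omega) (by omega))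
    (fun i h1 h2 => hnc i (by omega) (by omega) (by omega)) with
    ⟨δ, hδ, hQ⟩ | ⟨hkj, t, ht, ht2⟩
  · have hmε : m = 1 → ε < 0 := hP 2 le_rfl (by omega) ▸ hmb
    rw [ChannelIndex, hP j (by omega) (by omega), hQ (j + 1) le_rfl (by omega)] at hchj
    have hδε : δ = -ε := by
      rcases hε with rfl | rfl <;> rcases hδ with rfl | rfl <;> omega
    rw [entries_eq_replicate hP, entries_eq_replicate hQ, hδε]
    push_cast
    exact hasShortForm_replicate_append_replicate hm hε hmε (by omega) (by omega)
      (by obtain ⟨w, hw⟩ := hkodd; exact ⟨w, by omega⟩)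
  · rw [entries_eq_replicate hP, show k - j = 1 by omega, entries_one]
    have hk := hb (j + 1) (by omega) (by omega)
    exact hasShortForm_replicate_append_singleton hm hε (hP 2 le_rfl (by omega) ▸ hmb)
      (by obtain ⟨w, hw⟩ := hkodd; exact ⟨w - 1, by omega⟩) hk.2 hk.1
      (by rcases abs_cases t with h | h <;> omega)
  · rw [hj2, entries_one, hs, entries_eq_replicate hQ, show j = 2 by omega]
    push_cast
    exact hasShortForm_cons_replicate hm hδ hs2 (by omega)
      (by obtain ⟨w, hw⟩ := hkodd; exact ⟨w - 1, by omega⟩)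
  · rw [hj2, entries_one, hs, hkj, entries_one, ht]
    push_cast
    exact hasShortForm_three hm hs2 ht2 (by omega)

lemma exists_forall_channelIndex_eq {b : ℕ → ℤ} {k : ℕ} (hk : 2 ≤ k)
    (hch : ((Finset.Icc 1 (k - 1)).filter (fun i => ChannelIndex b i)).card ≤ 2)
    (h1 : ChannelIndex b 1) :
    ∃ j, ∀ i, 2 ≤ i → i < k → ChannelIndex b i → i = j := by
  set S := (Finset.Icc 2 (k - 1)).filter (fun i => ChannelIndex b i)
  have hsub : insert 1 S ⊆ (Finset.Icc 1 (k - 1)).filter (fun i => ChannelIndex b i) := by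
    intro i hi
    simp only [S, Finset.mem_insert, Finset.mem_filter, Finset.mem_Icc] at hi ⊢
    rcases hi with rfl | ⟨⟨h2, hk⟩, hc⟩
    · exact ⟨⟨le_rfl, by omega⟩, h1⟩
    · exact ⟨⟨by omega, hk⟩, hc⟩
  have hS : S.card ≤ 1 := by
    have := Finset.card_le_card hsub
    rw [Finset.card_insert_of_notMem (by simp [S])] at this
    omega
  obtain ⟨j, hj⟩ := Finset.card_le_one_iff_subset_singleton.1 hS
  exact ⟨j, fun i h2 hk hc => Finset.mem_singleton.1
    (hj (Finset.mem_filter.2 ⟨Finset.mem_Icc.2 ⟨h2, by omega⟩, hc⟩))⟩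

lemma channelIndex_one {b : ℕ → ℤ} (hinit : 4 ≤ b 1 ∨ (b 1 = 2 ∧ b 2 ≤ -2))
    (hb2 : b 2 ≠ 0 ∧ Even (b 2)) : ChannelIndex b 1 := by
  obtain ⟨h20, r, hr⟩ := hb2
  show b 1 * b 2 < 0 ∨ 4 < b 1 * b 2
  rcases lt_or_gt_of_ne h20 with h | h <;> rcases hinit with h' | ⟨h', h''⟩
  · exact Or.inl (by nlinarith)
  · exact Or.inl (by nlinarith)
  · exact Or.inr (by nlinarith [show 2 ≤ b 2 by omega])
  · omega

theorem stmt_16 (k : ℕ) (hk : 3 ≤ k) (hkodd : Odd k) (b : ℕ → ℤ)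
    (hb : ∀ i, 1 ≤ i → i ≤ k → b i ≠ 0 ∧ Even (b i))
    (hch : ((Finset.Icc 1 (k - 1)).filter (fun i => ChannelIndex b i)).card ≤ 2)
    (hinit : 4 ≤ b 1 ∨ (b 1 = 2 ∧ b 2 ≤ -2))
    (v : ℚ) (hv : v = cf ((List.range k).map fun i => ((b (i + 1) : ℚ)))) :
    (∃ m n : ℤ, 1 ≤ m ∧ n ≠ 0 ∧ n ≠ 1 ∧
      v = cf [2 * (m : ℚ) + 1, 2 * (n : ℚ) - 1]) ∨
    (∃ m n l : ℤ, 1 ≤ m ∧ 2 ≤ |n| ∧ 2 ≤ |l| ∧ (m = 1 → n ≤ -2) ∧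
      v = cf [2 * (m : ℚ), 2 * (n : ℚ), 2 * (l : ℚ)]) ∨
    (∃ m n l : ℤ, 1 ≤ m ∧ 2 ≤ |n| ∧ 1 ≤ l ∧ (m = 1 → n ≤ -2) ∧
      v = cf [2 * (m : ℚ), 2 * (n : ℚ) - 1, -(2 * (l : ℚ))]) ∨
    (∃ m n l : ℤ, 1 ≤ m ∧ 2 ≤ |n| ∧ 1 ≤ l ∧ (m = 1 → n ≤ -2) ∧
      v = cf [2 * (m : ℚ), 2 * (n : ℚ) + 1, 2 * (l : ℚ)]) ∨
    (∃ m n l : ℤ, 1 ≤ m ∧ n ≠ 0 ∧ l ≠ 0 ∧ l ≠ 1 ∧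
      v = cf [2 * (m : ℚ) + 1, 2 * (n : ℚ), 2 * (l : ℚ) - 1]) ∨
    (∃ m n l : ℤ, 1 ≤ m ∧ n ≤ -1 ∧ 2 ≤ l ∧
      v = cf [2 * (m : ℚ) + 1, 2 * (n : ℚ), -2, 2 * (l : ℚ) - 1]) ∨
    (∃ m n l : ℤ, 1 ≤ m ∧ n ≤ -1 ∧ 1 ≤ l ∧
      v = cf [2 * (m : ℚ) + 1, 2 * (n : ℚ) - 1, -2, 2 * (l : ℚ)]) ∨
    (∃ m n l : ℤ, 1 ≤ m ∧ 1 ≤ n ∧ l ≤ -1 ∧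
      v = cf [2 * (m : ℚ) + 1, 2 * (n : ℚ), 2, 2 * (l : ℚ) - 1]) ∨
    (∃ m n l : ℤ, 1 ≤ m ∧ 2 ≤ n ∧ l ≤ -1 ∧
      v = cf [2 * (m : ℚ) + 1, 2 * (n : ℚ) - 1, 2, 2 * (l : ℚ)]) := by
  obtain ⟨m, hm⟩ : ∃ m, b 1 = 2 * m := by
    obtain ⟨r, hr⟩ := (hb 1 le_rfl (by omega)).2
    exact ⟨r, by omega⟩
  have hb' : ∀ i, 2 ≤ i → i ≤ k → b i ≠ 0 ∧ Even (b i) := fun i h1 h2 => hb i (by omega) h2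
  have hv' : v = cf (2 * m :: entries b 2 (k - 1)) := by
    rw [hv, ← entries]
    conv_lhs => rw [show k = 1 + (k - 1) by omega, entries_add, entries_one, hm]
    push_cast
    rfl
  obtain ⟨j, hj⟩ := exists_forall_channelIndex_eq (by omega) hch
    (channelIndex_one hinit (hb' 2 le_rfl (by omega)))
  rw [hv']
  by_cases hjc : 2 ≤ j ∧ j < k ∧ ChannelIndex b j
  · exact hasShortForm_of_channelIndex hkodd hjc.1 hjc.2.1 hb' (by omega) (by omega) hjc.2.2
      (fun i h2 hk hij hc => hij (hj i h2 hk hc))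
  · exact hasShortForm_of_forall_not_channelIndex hk hkodd hb' (by omega) (by omega)
      (fun i h2 hk hc => hjc (hj i h2 hk hc ▸ ⟨h2, hk, hc⟩))
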